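/- arXiv:1112.2000 — 7 statements merged into one kernel-verified Lean document; each statement's English description precedes it below -/
import Mathlib

section
/- For every n ≥ 1, the discrepancy of the Greater-Than function GT_n with respect to the distribution μ_n satisfies Disc_{μ_n}(GT_n) = max over all rectangles R = S × T of |D_n(R)| < 20/√n. -/
/-- The value of a bit string `x ∈ {0,1}^n`, with bit 1 (index 0) most significant:
`val x = Σ_{i=1}^n x_i · 2^{n-i}`. -/
def val {n : ℕ} (x : Fin n → Bool) : ℕ :=
  ∑ i : Fin n, if x i then 2 ^ (n - 1 - (i : ℕ)) else 0

/-- The hard distribution `μ_n` for Greater-Than: `μ_n(x,y) = (1/n)·2^{-(2n-k)}` if `x ≠ y`,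
where `k` is the smallest index (1-based) with `x_k ≠ y_k`, and `μ_n(x,y) = 0` if `x = y`. -/
noncomputable def muGT (n : ℕ) (x y : Fin n → Bool) : ℝ :=
  if h : x = y then 0
  else
    have hne : (Finset.univ.filter fun i => x i ≠ y i).Nonempty := by
      obtain ⟨i, hi⟩ := Function.ne_iff.mp h
      exact ⟨i, Finset.mem_filter.mpr ⟨Finset.mem_univ i, hi⟩⟩
    (1 / n) *
      (2 : ℝ) ^ (-(2 * (n : ℤ) -
        ((((Finset.univ.filter fun i => x i ≠ y i).min' hne : Fin n) : ℕ) + 1)))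

/-- The signed discrepancy of the Greater-Than function `GT_n` (where `GT_n(x,y)=1` iff
`val x > val y`) on the rectangle `S × T` with respect to `μ_n`:
`D_n(S×T) = Σ_{(x,y)∈S×T, GT=1} μ_n(x,y) − Σ_{(x,y)∈S×T, GT=0} μ_n(x,y)`. -/
noncomputable def discGT (n : ℕ) (S T : Finset (Fin n → Bool)) : ℝ :=
  ∑ x ∈ S, ∑ y ∈ T, (if val y < val x then muGT n x y else - muGT n x y)

/-!
Write `σ(b) = ±1` for a bit `b`. Splitting off the first index where `x` and `y` differ,
`n 8ⁿ (±μ_n(x, y)) = Σ_k 4^k 2^(n-k) [x, y agree below k] (σ(x_k) - σ(y_k))`.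
Agreeing below `k` is an equivalence whose classes have `2^(n-k)` elements, so the `k`-th term
of `n 8ⁿ D_n(S × T)` is `4^k Σ_z (B_S C_T - C_S B_T)(k, z)`, where `C_S(k, z)` counts the
elements of `S` agreeing with `z` below `k` and `B_S(k, z)` is the sum of their signs at `k`.
Now apply Cauchy–Schwarz over the pairs `(k, z)` with weights `4^k`. Each `4^k Σ_z C(k, z)²` is
at most `8ⁿ`, and `Σ_z B(k, z)² = 4 Σ_z C(k+1, z)² - Σ_z C(k, z)²` telescopes, so that
`Σ_k 4^k Σ_z B(k, z)² ≤ 8ⁿ`. Hence `|D_n(S × T)| ≤ 2/√n`.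
-/

open Finset hiding val

section PrefixEq

variable {n : ℕ}

def PrefixEq (k : ℕ) (x y : Fin n → Bool) : Prop :=
  ∀ i : Fin n, (i : ℕ) < k → x i = y i

instance (k : ℕ) (x y : Fin n → Bool) : Decidable (PrefixEq k x y) :=
  inferInstanceAs (Decidable (∀ i : Fin n, (i : ℕ) < k → x i = y i))

namespace PrefixEq

variable {k : ℕ} {x y z : Fin n → Bool}

lemma symm (h : PrefixEq k x y) : PrefixEq k y x := fun i hi ↦ (h i hi).symm

lemma trans (h : PrefixEq k x y) (h' : PrefixEq k y z) : PrefixEq k x z :=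
  fun i hi ↦ (h i hi).trans (h' i hi)

lemma comm : PrefixEq k x y ↔ PrefixEq k y x := ⟨symm, symm⟩

lemma succ_iff (k : Fin n) : PrefixEq (k + 1) x y ↔ PrefixEq k x y ∧ x k = y k := by
  refine ⟨fun h ↦ ⟨fun i hi ↦ h i (by omega), h k (by omega)⟩, fun ⟨h, hk⟩ i hi ↦ ?_⟩
  obtain hi | hi := Nat.lt_succ_iff_lt_or_eq.1 hi
  · exact h i hi
  · rwa [Fin.ext hi]

end PrefixEq

lemma exists_prefixEq_ne {x y : Fin n → Bool} (h : x ≠ y) :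
    ∃ k : Fin n, PrefixEq k x y ∧ x k ≠ y k := by
  have hs : ({i | x i ≠ y i} : Finset (Fin n)).Nonempty := by
    obtain ⟨i, hi⟩ := Function.ne_iff.1 h
    exact ⟨i, by simpa using hi⟩
  refine ⟨_, fun i hi ↦ ?_, (mem_filter.1 (min'_mem _ hs)).2⟩
  by_contra hne
  exact (min'_le _ i (by simpa using hne)).not_gt hi

lemma card_prefixEq (k : ℕ) (x : Fin n → Bool) :
    #{y | PrefixEq k x y} = 2 ^ (n - k) := by
  have : ({y | PrefixEq k x y} : Finset (Fin n → Bool)) =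
      Fintype.piFinset fun i : Fin n ↦ if (i : ℕ) < k then {x i} else univ := by
    ext y
    rw [mem_filter_univ, Fintype.mem_piFinset]
    refine forall_congr' fun i ↦ ?_
    split_ifs with hi
    · simp [hi, eq_comm]
    · simp [hi]
  simp only [this, Fintype.card_piFinset, apply_ite card, card_singleton, card_univ,
    Fintype.card_bool, prod_ite, prod_const_one, prod_const, one_mul]
  rw [filter_not, card_sdiff_of_subset (filter_subset _ _), Fin.card_filter_val_lt]
  simp only [card_univ, Fintype.card_fin]
  congr 1
  omega

lemma card_prefixEq_and (k : ℕ) (x y : Fin n → Bool) :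
    #{z | PrefixEq k x z ∧ PrefixEq k y z} = if PrefixEq k x y then 2 ^ (n - k) else 0 := by
  split_ifs with h
  · rw [← card_prefixEq k x]
    congr 1
    ext z
    simp only [mem_filter_univ]
    exact ⟨And.left, fun hz ↦ ⟨hz, h.symm.trans hz⟩⟩
  · rw [card_eq_zero, filter_eq_empty_iff]
    exact fun z _ ⟨hx, hy⟩ ↦ h (hx.trans hy.symm)

def flipBit (k : Fin n) (z : Fin n → Bool) : Fin n → Bool :=
  Function.update z k (!z k)

lemma flipBit_involutive (k : Fin n) : Function.Involutive (flipBit k) := by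
  intro z
  ext i
  by_cases hi : i = k
  · subst hi; simp [flipBit]
  · simp [flipBit, hi]

lemma prefixEq_succ_flipBit_iff {x z : Fin n → Bool} (k : Fin n) :
    PrefixEq (k + 1) x (flipBit k z) ↔ PrefixEq k x z ∧ x k ≠ z k := by
  have hlow : PrefixEq k (flipBit k z) z :=
    fun i hi ↦ Function.update_of_ne (Fin.ne_of_lt hi) _ _
  have htop : flipBit k z k = !z k := Function.update_self ..
  rw [PrefixEq.succ_iff, htop]
  exact and_congr ⟨fun h ↦ h.trans hlow, fun h ↦ h.trans hlow.symm⟩ (by cases x k <;> simp)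

end PrefixEq

section GreaterThan

lemma val_succ {n : ℕ} (x : Fin (n + 1) → Bool) :
    val x = (if x 0 then 2 ^ n else 0) + val (Fin.tail x) := by
  simp [val, Fin.sum_univ_succ, Fin.tail, Nat.sub_sub, Nat.add_comm 1]

lemma val_lt_two_pow : ∀ {n : ℕ} (x : Fin n → Bool), val x < 2 ^ n
  | 0, _ => by simp [val]
  | n + 1, x => by
    have := val_lt_two_pow (Fin.tail x)
    rw [val_succ, pow_succ]
    split <;> omega

lemma val_lt_val_of_prefixEq : ∀ {n : ℕ} {x y : Fin n → Bool} (k : Fin n),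
    PrefixEq k x y → x k = true → y k = false → val y < val x
  | n + 1, x, y, k, h, hx, hy => by
    rw [val_succ, val_succ]
    cases k using Fin.cases with
    | zero =>
      have := val_lt_two_pow (Fin.tail y)
      simp only [hx, hy, Bool.false_eq_true, if_true, if_false]
      omega
    | succ j =>
      have htail := val_lt_val_of_prefixEq (x := Fin.tail x) (y := Fin.tail y) j
        (fun i hi ↦ h i.succ (by simpa using hi)) hx hy
      rw [h 0 (by simp)]
      omega

variable {n : ℕ}

lemma muGT_eq_of_prefixEq {x y : Fin n → Bool} {k : Fin n} (h : PrefixEq k x y)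
    (hk : x k ≠ y k) : muGT n x y = (n : ℝ)⁻¹ * 2 ^ ((k : ℤ) + 1 - 2 * n) := by
  have hxy : x ≠ y := fun e ↦ hk (congrFun e k)
  have hmin : ({i | x i ≠ y i} : Finset (Fin n)).min' ⟨k, by simpa using hk⟩ = k := by
    refine le_antisymm (min'_le _ _ (by simpa using hk)) (le_min' _ _ _ fun i hi ↦ ?_)
    by_contra hik
    exact (by simpa using hi : x i ≠ y i) (h i (not_le.1 hik))
  simp only [muGT, dif_neg hxy, hmin, one_div]
  congr 2
  ring

end GreaterThan

section Decomposition

variable {n : ℕ}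

def spin (b : Bool) : ℝ := if b then 1 else -1

lemma natCast_mul_eight_pow_mul_zpow {k : ℕ} (h : k < n) :
    (n : ℝ) * 8 ^ n * ((n : ℝ)⁻¹ * 2 ^ ((k : ℤ) + 1 - 2 * n)) = 4 ^ k * 2 ^ (n - k) * 2 := by
  obtain ⟨j, rfl⟩ := Nat.exists_eq_add_of_lt h
  rw [show (k : ℤ) + 1 - 2 * ↑(k + j + 1) = -((k + 2 * j + 1 : ℕ) : ℤ) by push_cast; ring,
    zpow_neg, zpow_natCast, show k + j + 1 - k = j + 1 by omega]
  field_simp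
  rw [show (8 : ℝ) = 2 ^ 3 by norm_num, show (4 : ℝ) = 2 ^ 2 by norm_num, ← pow_mul, ← pow_mul]
  ring

lemma natCast_mul_eight_pow_mul_signedMuGT (x y : Fin n → Bool) :
    n * 8 ^ n * (if val y < val x then muGT n x y else -muGT n x y) =
      ∑ k : Fin n, 4 ^ (k : ℕ) * 2 ^ (n - k) *
        (if PrefixEq k x y then spin (x k) - spin (y k) else 0) := by
  by_cases hxy : x = y
  · subst hxy
    simp [muGT]
  obtain ⟨k, hk, hne⟩ := exists_prefixEq_ne hxy
  -- Below the first difference `k` the spins cancel; above it `PrefixEq` fails.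
  rw [sum_eq_single k, if_pos hk, muGT_eq_of_prefixEq hk hne]
  · have hw := natCast_mul_eight_pow_mul_zpow (n := n) k.isLt
    cases hx : x k <;> cases hy : y k <;> simp only [hx, hy, ne_eq, not_true_eq_false] at hne
    · rw [if_neg (val_lt_val_of_prefixEq k hk.symm hy hx).not_gt, mul_neg, hw]
      simp only [spin, Bool.false_eq_true, if_true, if_false]
      ring
    · rw [if_pos (val_lt_val_of_prefixEq k hk hx hy), hw]
      simp only [spin, Bool.false_eq_true, if_true, if_false]
      ring
  · intro j _ hjk
    obtain hj | hj := lt_or_gt_of_ne hjk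
    · rw [hk j hj, sub_self, ite_self, mul_zero]
    · rw [if_neg fun h ↦ hne (h k hj), mul_zero]
  · simp

end Decomposition

section Cylinders

variable {n : ℕ} (S T : Finset (Fin n → Bool))

noncomputable def cylCount (k : ℕ) (z : Fin n → Bool) : ℝ :=
  #{x ∈ S | PrefixEq k x z}

noncomputable def cylBias (k : Fin n) (z : Fin n → Bool) : ℝ :=
  ∑ x ∈ S with PrefixEq k x z, spin (x k)

lemma cylCount_eq_sum (k : ℕ) (z : Fin n → Bool) :
    cylCount S k z = ∑ x ∈ S with PrefixEq k x z, (1 : ℝ) := by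
  simp [cylCount]

lemma sum_mul_sum_prefixEq (k : ℕ) (f g : (Fin n → Bool) → ℝ) :
    ∑ z, (∑ x ∈ S with PrefixEq k x z, f x) * (∑ y ∈ T with PrefixEq k y z, g y) =
      2 ^ (n - k) * ∑ x ∈ S, ∑ y ∈ T, if PrefixEq k x y then f x * g y else 0 := by
  simp_rw [sum_filter, sum_mul_sum, mul_sum]
  rw [sum_comm]
  refine sum_congr rfl fun x _ ↦ ?_
  rw [sum_comm]
  refine sum_congr rfl fun y _ ↦ ?_
  simp_rw [ite_zero_mul_ite_zero]
  rw [← sum_filter, sum_const, card_prefixEq_and, nsmul_eq_mul]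
  split_ifs <;> simp

lemma sum_cylBias_mul_cylCount_sub (k : Fin n) :
    ∑ z, (cylBias S k z * cylCount T k z - cylCount S k z * cylBias T k z) =
      2 ^ (n - k) * ∑ x ∈ S, ∑ y ∈ T,
        if PrefixEq k x y then spin (x k) - spin (y k) else 0 := by
  simp only [cylBias, cylCount_eq_sum, sum_sub_distrib, sum_mul_sum_prefixEq, ← mul_sub]
  rw [← sum_sub_distrib]
  refine congrArg _ (sum_congr rfl fun x _ ↦ ?_)
  rw [← sum_sub_distrib]
  refine sum_congr rfl fun y _ ↦ ?_
  split_ifs <;> ring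

lemma natCast_mul_eight_pow_mul_discGT :
    n * 8 ^ n * discGT n S T = ∑ k : Fin n, 4 ^ (k : ℕ) *
      ∑ z, (cylBias S k z * cylCount T k z - cylCount S k z * cylBias T k z) := by
  simp_rw [sum_cylBias_mul_cylCount_sub, discGT, mul_sum, natCast_mul_eight_pow_mul_signedMuGT,
    ← mul_assoc]
  conv_rhs => rw [sum_comm]
  exact sum_congr rfl fun x _ ↦ sum_comm

end Cylinders

section Energy

variable {n : ℕ} (S : Finset (Fin n → Bool))

lemma cylCount_le (k : ℕ) (z : Fin n → Bool) : cylCount S k z ≤ 2 ^ (n - k) := by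
  have hcyl : #{x | PrefixEq k x z} = 2 ^ (n - k) := by
    rw [← card_prefixEq k z]
    exact congrArg card (filter_congr fun _ _ ↦ PrefixEq.comm)
  have := card_le_card (filter_subset_filter (PrefixEq k · z) (subset_univ S))
  simp only [cylCount]
  exact_mod_cast hcyl ▸ this

lemma sum_cylCount (k : ℕ) : ∑ z, cylCount S k z = #S * 2 ^ (n - k) := by
  simp_rw [cylCount_eq_sum, sum_filter]
  rw [sum_comm]
  simp_rw [sum_boole, card_prefixEq, sum_const, nsmul_eq_mul]
  push_cast
  ring

lemma four_pow_mul_sum_sq_cylCount_le {k : ℕ} (hk : k ≤ n) :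
    4 ^ k * ∑ z, cylCount S k z ^ 2 ≤ 8 ^ n := by
  have hS : (#S : ℝ) ≤ 2 ^ n := by
    exact_mod_cast (card_le_univ S).trans_eq (by simp)
  have hsq : ∑ z, cylCount S k z ^ 2 ≤ 2 ^ (n - k) * ∑ z, cylCount S k z := by
    rw [mul_sum]
    refine sum_le_sum fun z _ ↦ ?_
    rw [sq]
    exact mul_le_mul_of_nonneg_right (cylCount_le S k z) (Nat.cast_nonneg _)
  obtain ⟨j, rfl⟩ := Nat.exists_eq_add_of_le hk
  calc 4 ^ k * ∑ z, cylCount S k z ^ 2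
      ≤ 4 ^ k * (2 ^ j * (2 ^ (k + j) * 2 ^ j)) := by
        rw [sum_cylCount, Nat.add_sub_cancel_left] at hsq
        gcongr
        exact hsq.trans (by gcongr)
    _ = 8 ^ (k + j) := by
        rw [show (8 : ℝ) = 2 ^ 3 by norm_num, show (4 : ℝ) = 2 ^ 2 by norm_num, ← pow_mul,
          ← pow_mul]
        ring

lemma filter_filter_apply_eq (k : Fin n) (z : Fin n → Bool) :
    {x ∈ {x ∈ S | PrefixEq k x z} | x k = z k} = {x ∈ S | PrefixEq (k + 1) x z} := by
  rw [filter_filter]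
  exact filter_congr fun x _ ↦ (PrefixEq.succ_iff k).symm

lemma filter_filter_apply_ne (k : Fin n) (z : Fin n → Bool) :
    {x ∈ {x ∈ S | PrefixEq k x z} | ¬x k = z k} = {x ∈ S | PrefixEq (k + 1) x (flipBit k z)} := by
  rw [filter_filter]
  exact filter_congr fun x _ ↦ (prefixEq_succ_flipBit_iff k).symm

lemma cylCount_eq_add (k : Fin n) (z : Fin n → Bool) :
    cylCount S k z = cylCount S (k + 1) z + cylCount S (k + 1) (flipBit k z) := by
  simp only [cylCount]
  rw [← filter_filter_apply_eq S k z, ← filter_filter_apply_ne S k z]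
  exact_mod_cast (card_filter_add_card_filter_not _).symm

lemma cylBias_eq (k : Fin n) (z : Fin n → Bool) :
    cylBias S k z = spin (z k) * (cylCount S (k + 1) z - cylCount S (k + 1) (flipBit k z)) := by
  have hne : ∀ x ∈ {x ∈ {x ∈ S | PrefixEq k x z} | ¬x k = z k}, spin (x k) = -spin (z k) := by
    intro x hx
    cases hz : z k <;> simp_all [spin]
  rw [cylBias, ← sum_filter_add_sum_filter_not _ (fun x ↦ x k = z k),
    sum_congr rfl fun x hx ↦ congrArg spin (mem_filter.1 hx).2, sum_congr rfl hne,
    filter_filter_apply_eq, filter_filter_apply_ne]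
  simp only [cylCount, sum_const, nsmul_eq_mul]
  ring

lemma sq_cylBias (k : Fin n) (z : Fin n → Bool) :
    cylBias S k z ^ 2 = (cylCount S (k + 1) z - cylCount S (k + 1) (flipBit k z)) ^ 2 := by
  rw [cylBias_eq, mul_pow]
  cases z k <;> simp [spin]

lemma sum_sq_cylBias (k : Fin n) :
    ∑ z, cylBias S k z ^ 2 = 4 * ∑ z, cylCount S (k + 1) z ^ 2 - ∑ z, cylCount S k z ^ 2 := by
  have hflip : ∑ z, cylCount S (k + 1) (flipBit k z) ^ 2 = ∑ z, cylCount S (k + 1) z ^ 2 :=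
    Equiv.sum_comp ((flipBit_involutive k).toPerm _) fun z ↦ cylCount S (k + 1) z ^ 2
  calc ∑ z, cylBias S k z ^ 2
      = ∑ z, (2 * cylCount S (k + 1) z ^ 2 + 2 * cylCount S (k + 1) (flipBit k z) ^ 2
          - cylCount S k z ^ 2) :=
        sum_congr rfl fun z _ ↦ by rw [sq_cylBias, cylCount_eq_add]; ring
    _ = 4 * ∑ z, cylCount S (k + 1) z ^ 2 - ∑ z, cylCount S k z ^ 2 := by
        rw [sum_sub_distrib, sum_add_distrib, ← mul_sum, ← mul_sum, hflip]
        ring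

lemma sum_four_pow_mul_sum_sq_cylBias_le :
    ∑ k : Fin n, 4 ^ (k : ℕ) * ∑ z, cylBias S k z ^ 2 ≤ 8 ^ n := by
  set E : ℕ → ℝ := fun j ↦ 4 ^ j * ∑ z, cylCount S j z ^ 2
  calc ∑ k : Fin n, 4 ^ (k : ℕ) * ∑ z, cylBias S k z ^ 2
      = ∑ k : Fin n, (E (k + 1) - E k) :=
        sum_congr rfl fun k _ ↦ by simp only [E, sum_sq_cylBias]; ring
    _ = E n - E 0 := by
        rw [Fin.sum_univ_eq_sum_range (fun j ↦ E (j + 1) - E j), sum_range_sub]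
    _ ≤ 8 ^ n := by
        have hE0 : 0 ≤ E 0 := by positivity
        linarith [four_pow_mul_sum_sq_cylCount_le S le_rfl]

lemma sum_four_pow_mul_sum_sq_cylCount_le :
    ∑ k : Fin n, 4 ^ (k : ℕ) * ∑ z, cylCount S k z ^ 2 ≤ n * 8 ^ n := by
  simpa using sum_le_card_nsmul univ (fun k : Fin n ↦ 4 ^ (k : ℕ) * ∑ z, cylCount S k z ^ 2) _
    fun k _ ↦ four_pow_mul_sum_sq_cylCount_le S k.isLt.le

end Energy

lemma sq_sum_mul_sum_mul_le {ι κ : Type*} [Fintype ι] [Fintype κ] (w : ι → ℝ)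
    (hw : ∀ i, 0 ≤ w i) (f g : ι → κ → ℝ) :
    (∑ i, w i * ∑ j, f i j * g i j) ^ 2 ≤
      (∑ i, w i * ∑ j, f i j ^ 2) * ∑ i, w i * ∑ j, g i j ^ 2 := by
  have hprod (h : ι → κ → ℝ) : ∑ i, w i * ∑ j, h i j = ∑ p : ι × κ, w p.1 * h p.1 p.2 := by
    simp_rw [mul_sum]
    exact (Fintype.sum_prod_type' _).symm
  rw [hprod (fun i j ↦ f i j * g i j), hprod (fun i j ↦ f i j ^ 2), hprod fun i j ↦ g i j ^ 2]
  refine sum_sq_le_sum_mul_sum_of_sq_le_mul _ (fun p _ ↦ ?_) (fun p _ ↦ ?_) fun p _ ↦ ?_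
  · exact mul_nonneg (hw p.1) (sq_nonneg _)
  · exact mul_nonneg (hw p.1) (sq_nonneg _)
  · exact le_of_eq (by ring)

section Discrepancy

variable {n : ℕ}

lemma abs_sum_four_pow_mul_sum_mul_le (f g : Fin n → (Fin n → Bool) → ℝ)
    (hf : ∑ k : Fin n, 4 ^ (k : ℕ) * ∑ z, f k z ^ 2 ≤ 8 ^ n)
    (hg : ∑ k : Fin n, 4 ^ (k : ℕ) * ∑ z, g k z ^ 2 ≤ n * 8 ^ n) :
    |∑ k : Fin n, 4 ^ (k : ℕ) * ∑ z, f k z * g k z| ≤ 8 ^ n * √n := by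
  have hCS := (sq_sum_mul_sum_mul_le _ (fun k ↦ by positivity) f g).trans
    (mul_le_mul hf hg (by positivity) (by positivity))
  refine (Real.abs_le_sqrt hCS).trans_eq ?_
  rw [show (8 : ℝ) ^ n * (n * 8 ^ n) = (8 ^ n) ^ 2 * n by ring, Real.sqrt_mul (by positivity),
    Real.sqrt_sq (by positivity)]

lemma abs_discGT_le (hn : n ≠ 0) (S T : Finset (Fin n → Bool)) :
    |discGT n S T| ≤ 2 / √n := by
  have hX := abs_sum_four_pow_mul_sum_mul_le (cylBias S) (fun k ↦ cylCount T k)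
    (sum_four_pow_mul_sum_sq_cylBias_le S) (sum_four_pow_mul_sum_sq_cylCount_le T)
  have hY := abs_sum_four_pow_mul_sum_mul_le (cylBias T) (fun k ↦ cylCount S k)
    (sum_four_pow_mul_sum_sq_cylBias_le T) (sum_four_pow_mul_sum_sq_cylCount_le S)
  have hD := natCast_mul_eight_pow_mul_discGT S T
  simp_rw [sum_sub_distrib, mul_sub, sum_sub_distrib, mul_comm (cylCount S _ _)] at hD
  have hpos : (0 : ℝ) < n * 8 ^ n := by positivity
  have hsum : n * 8 ^ n * |discGT n S T| ≤ 2 * 8 ^ n * √n := by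
    rw [← abs_of_pos hpos, ← abs_mul, hD]
    exact (abs_sub _ _).trans (by linarith)
  calc |discGT n S T| ≤ 2 * 8 ^ n * √n / (n * 8 ^ n) := by rw [le_div_iff₀ hpos]; linarith
    _ = 2 / √n := by
      field_simp
      exact Real.sq_sqrt n.cast_nonneg

end Discrepancy

/-- For every `n ≥ 1`, the discrepancy of `GT_n` w.r.t. `μ_n`, i.e. the maximum of `|D_n(R)|`
over all rectangles `R = S × T`, is less than `20/√n`. -/
theorem discGT_lt (n : ℕ) (hn : 1 ≤ n) (S T : Finset (Fin n → Bool)) :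
    |discGT n S T| < 20 / Real.sqrt n := by
  have hsqrt : 0 < Real.sqrt n := Real.sqrt_pos.2 (by exact_mod_cast hn)
  calc |discGT n S T| ≤ 2 / Real.sqrt n := abs_discGT_le (by omega) S T
    _ < 20 / Real.sqrt n := by gcongr; norm_num
end

section
/- Suppose μ and ν are probability distributions on a finite set U with D(μ‖ν) ≤ I, where I ≥ 0, and let ε > 0. Then μ({x ∈ U : 2^{(I+1)/ε}·ν(x) < μ(x)}) < ε. -/
open Real Finset

lemma aux_mul_log_ge (a b : ℝ) (ha : 0 ≤ a) (hb : 0 ≤ b) (hab : 0 < a → 0 < b) :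
    -(b / (Real.exp 1 * Real.log 2)) ≤ a * Real.logb 2 (a / b) := by
  have hlog2 : 0 < Real.log 2 := Real.log_pos one_lt_two
  rcases eq_or_lt_of_le ha with h | h
  · rw [← h]
    simp only [zero_mul]
    have : 0 ≤ b / (Real.exp 1 * Real.log 2) := by positivity
    linarith
  · have hb' := hab h
    have he : (0:ℝ) < Real.exp 1 := Real.exp_pos 1
    -- key : a * log (a/b) ≥ -(b / e)
    have key : -(b / Real.exp 1) ≤ a * Real.log (a / b) := by
      have h1 : Real.log (b / (Real.exp 1 * a)) ≤ b / (Real.exp 1 * a) - 1 :=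
        Real.log_le_sub_one_of_pos (by positivity)
      rw [Real.log_div (ne_of_gt hb') (by positivity), Real.log_mul (ne_of_gt he) (ne_of_gt h),
        Real.log_exp] at h1
      have h2 : a * (Real.log b - (1 + Real.log a)) ≤ a * (b / (Real.exp 1 * a) - 1) :=
        mul_le_mul_of_nonneg_left h1 ha
      have h3 : a * (b / (Real.exp 1 * a) - 1) = b / Real.exp 1 - a := by
        field_simp
      rw [Real.log_div (ne_of_gt h) (ne_of_gt hb')]
      nlinarith [h2, h3]
    have heq : a * Real.logb 2 (a / b) = (a * Real.log (a / b)) / Real.log 2 := by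
      rw [Real.logb]; ring
    rw [heq, le_div_iff₀ hlog2]
    have h4 : -(b / (Real.exp 1 * Real.log 2)) * Real.log 2 = -(b / Real.exp 1) := by
      field_simp
    rw [h4]; exact key

/-- If `μ` and `ν` are probability distributions on a finite set `U` with
`D(μ‖ν) = Σ_x μ(x)·log₂(μ(x)/ν(x)) ≤ I` where `I ≥ 0`, and `ε > 0`, then
`μ({x : 2^{(I+1)/ε}·ν(x) < μ(x)}) < ε`. -/
theorem mu_large_ratio_lt {U : Type*} [Fintype U] (μ ν : U → ℝ) (I ε : ℝ)
    (hμ0 : ∀ x, 0 ≤ μ x) (hμ1 : ∑ x, μ x = 1)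
    (hν0 : ∀ x, 0 ≤ ν x) (hν1 : ∑ x, ν x = 1)
    (habs : ∀ x, 0 < μ x → 0 < ν x)
    (hI : 0 ≤ I) (hε : 0 < ε)
    (hKL : ∑ x, μ x * Real.logb 2 (μ x / ν x) ≤ I) :
    ∑ x ∈ Finset.univ.filter (fun x => (2 : ℝ) ^ ((I + 1) / ε) * ν x < μ x), μ x < ε := by
  classical
  by_contra hcon
  push_neg at hcon
  set c := (I + 1) / ε with hc
  set A := Finset.univ.filter (fun x => (2 : ℝ) ^ c * ν x < μ x) with hA
  have hc0 : 0 < c := div_pos (by linarith) hε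
  have hlog2 : 0 < Real.log 2 := Real.log_pos one_lt_two
  have he : (0:ℝ) < Real.exp 1 := Real.exp_pos 1
  have key : ∀ x, (if x ∈ A then c * μ x else -(ν x / (Real.exp 1 * Real.log 2)))
      ≤ μ x * Real.logb 2 (μ x / ν x) := by
    intro x
    by_cases hx : x ∈ A
    · simp only [hx, if_true]
      have hxA : (2 : ℝ) ^ c * ν x < μ x := (Finset.mem_filter.mp hx).2
      have h2c : (0:ℝ) < (2:ℝ) ^ c := by positivity
      have hμx : 0 < μ x := lt_of_le_of_lt (mul_nonneg h2c.le (hν0 x)) hxA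
      have hνx : 0 < ν x := habs x hμx
      have hratio : (2:ℝ) ^ c ≤ μ x / ν x := by
        rw [le_div_iff₀ hνx]; linarith
      have : c ≤ Real.logb 2 (μ x / ν x) := by
        calc c = Real.logb 2 ((2:ℝ) ^ c) :=
              (Real.logb_rpow (by norm_num) (by norm_num)).symm
        _ ≤ Real.logb 2 (μ x / ν x) := Real.logb_le_logb_of_le one_lt_two h2c hratio
      calc c * μ x ≤ Real.logb 2 (μ x / ν x) * μ x :=
            mul_le_mul_of_nonneg_right this (hμ0 x)
        _ = μ x * Real.logb 2 (μ x / ν x) := mul_comm _ _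
    · simp only [hx, if_false]
      exact aux_mul_log_ge (μ x) (ν x) (hμ0 x) (hν0 x) (habs x)
  have hsum : ∑ x, (if x ∈ A then c * μ x else -(ν x / (Real.exp 1 * Real.log 2))) ≤ I :=
    le_trans (Finset.sum_le_sum fun x _ => key x) hKL
  rw [Finset.sum_ite] at hsum
  have hfil1 : Finset.univ.filter (· ∈ A) = A := by
    ext x; simp [hA]
  have hfil2 : ∀ x ∈ Finset.univ.filter (· ∉ A), True := fun _ _ => trivial
  have hS : ε * c ≤ ∑ x ∈ Finset.univ.filter (· ∈ A), c * μ x := by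
    rw [← Finset.mul_sum, hfil1]
    calc ε * c ≤ (∑ x ∈ A, μ x) * c := mul_le_mul_of_nonneg_right hcon (le_of_lt hc0)
      _ = c * ∑ x ∈ A, μ x := mul_comm _ _
  have hT : -(1 / (Real.exp 1 * Real.log 2))
      ≤ ∑ x ∈ Finset.univ.filter (· ∉ A), -(ν x / (Real.exp 1 * Real.log 2)) := by
    rw [Finset.sum_neg_distrib, ← Finset.sum_div]
    have h2 : ∑ x ∈ Finset.univ.filter (· ∉ A), ν x ≤ 1 := by
      rw [← hν1]
      exact Finset.sum_le_sum_of_subset_of_nonneg (Finset.filter_subset _ _)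
        (fun x _ _ => hν0 x)
    have h3 : (∑ x ∈ Finset.univ.filter (· ∉ A), ν x) / (Real.exp 1 * Real.log 2)
        ≤ 1 / (Real.exp 1 * Real.log 2) := by
      apply div_le_div_of_nonneg_right h2 (by positivity) |>.trans_eq rfl
    linarith
  have hεc : ε * c = I + 1 := by
    rw [hc]; field_simp
  have heln2 : 1 < Real.exp 1 * Real.log 2 := by
    nlinarith [Real.exp_one_gt_d9, Real.log_two_gt_d9]
  have hinv : 1 / (Real.exp 1 * Real.log 2) < 1 := by
    rw [div_lt_one (by positivity)]; exact heln2
  linarith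
end

section
/- Let μ, ν_A, ν_B be probability distributions on a finite set U with D(μ‖ν_A) ≤ I and D(μ‖ν_B) ≤ I, where I ≥ 0, and let K = 2^{50(I+1)}. Then the 'good' set G = {x ∈ U : μ(x) ≤ K·ν_A(x) and μ(x) ≤ K·ν_B(x)} satisfies μ(G) ≥ 24/25. -/
lemma mul_log_ge_aux (t : ℝ) (ht : 0 < t) : -(Real.exp 1)⁻¹ ≤ t * Real.log t := by
  have he : (0:ℝ) < Real.exp 1 := Real.exp_pos 1
  have h := Real.log_le_sub_one_of_pos (x := (Real.exp 1 * t)⁻¹) (by positivity)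
  rw [Real.log_inv, Real.log_mul (ne_of_gt he) (ne_of_gt ht), Real.log_exp] at h
  have hlog : -((Real.exp 1 * t)⁻¹) ≤ Real.log t := by linarith
  have h2 : t * (-((Real.exp 1 * t)⁻¹)) ≤ t * Real.log t :=
    mul_le_mul_of_nonneg_left hlog ht.le
  have h3 : t * (-((Real.exp 1 * t)⁻¹)) = -(Real.exp 1)⁻¹ := by
    rw [mul_inv]
    field_simp
  linarith [h3 ▸ h2]

lemma bad_small {U : Type*} [Fintype U] (μ ν : U → ℝ) (I : ℝ)
    (hμ0 : ∀ x, 0 ≤ μ x)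
    (hν0 : ∀ x, 0 ≤ ν x) (hν1 : ∑ x, ν x = 1)
    (habs : ∀ x, 0 < μ x → 0 < ν x) (hI : 0 ≤ I)
    (hKL : ∑ x, μ x * Real.logb 2 (μ x / ν x) ≤ I) :
    ∑ x ∈ Finset.univ.filter (fun x => ¬ μ x ≤ (2:ℝ) ^ (50 * (I + 1)) * ν x), μ x ≤ 1/50 := by
  classical
  set B := Finset.univ.filter (fun x => ¬ μ x ≤ (2:ℝ) ^ (50 * (I + 1)) * ν x) with hB
  set Bc := Finset.univ.filter (fun x => μ x ≤ (2:ℝ) ^ (50 * (I + 1)) * ν x) with hBc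
  have hlog2 : (0:ℝ) < Real.log 2 := Real.log_pos (by norm_num)
  have he : (0:ℝ) < Real.exp 1 := Real.exp_pos 1
  have hBterm : ∀ x ∈ B, μ x * (50 * (I + 1)) ≤ μ x * Real.logb 2 (μ x / ν x) := by
    intro x hx
    simp only [hB, Finset.mem_filter] at hx
    have hxlt : (2:ℝ) ^ (50 * (I + 1)) * ν x < μ x := lt_of_not_ge hx.2
    have hrpow : (0:ℝ) < (2:ℝ) ^ (50 * (I + 1)) := Real.rpow_pos_of_pos (by norm_num) _
    have hμpos : 0 < μ x := lt_of_le_of_lt (mul_nonneg hrpow.le (hν0 x)) hxlt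
    have hνpos : 0 < ν x := habs x hμpos
    have hratio : (2:ℝ) ^ (50 * (I + 1)) ≤ μ x / ν x := by
      rw [le_div_iff₀ hνpos]; linarith
    have hkey : (50 * (I + 1)) ≤ Real.logb 2 (μ x / ν x) := by
      calc 50 * (I + 1) = Real.logb 2 ((2:ℝ) ^ (50 * (I + 1))) :=
            (Real.logb_rpow (by norm_num) (by norm_num)).symm
        _ ≤ Real.logb 2 (μ x / ν x) :=
            Real.logb_le_logb_of_le (by norm_num) hrpow hratio
    exact mul_le_mul_of_nonneg_left hkey hμpos.le
  have hBsum : (50 * (I + 1)) * ∑ x ∈ B, μ x ≤ ∑ x ∈ B, μ x * Real.logb 2 (μ x / ν x) := by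
    rw [Finset.mul_sum]
    refine Finset.sum_le_sum fun x hx => ?_
    rw [mul_comm]
    exact hBterm x hx
  have hBcterm : ∀ x ∈ Bc, -(ν x * (Real.exp 1 * Real.log 2)⁻¹) ≤
      μ x * Real.logb 2 (μ x / ν x) := by
    intro x _
    rcases eq_or_lt_of_le (hμ0 x) with h0 | hμpos
    · rw [← h0, zero_mul, neg_le, neg_zero]
      exact mul_nonneg (hν0 x) (by positivity)
    · have hνpos : 0 < ν x := habs x hμpos
      set t := μ x / ν x with ht
      have htpos : 0 < t := div_pos hμpos hνpos
      have key : -(Real.exp 1)⁻¹ ≤ t * Real.log t := mul_log_ge_aux t htpos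
      have h2 : (ν x / Real.log 2) * (-(Real.exp 1)⁻¹) ≤
          (ν x / Real.log 2) * (t * Real.log t) :=
        mul_le_mul_of_nonneg_left key (by positivity)
      have e1 : (ν x / Real.log 2) * (-(Real.exp 1)⁻¹) = -(ν x * (Real.exp 1 * Real.log 2)⁻¹) := by
        rw [mul_inv, div_eq_mul_inv]
        ring
      have e2 : μ x * Real.logb 2 (μ x / ν x) = (ν x / Real.log 2) * (t * Real.log t) := by
        rw [Real.logb, ← ht]
        have : μ x = ν x * t := by
          rw [ht, mul_div_cancel₀ _ (ne_of_gt hνpos)]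
        rw [this]; ring
      rw [e2, ← e1]; exact h2
  have hBcsum : -(Real.exp 1 * Real.log 2)⁻¹ ≤ ∑ x ∈ Bc, μ x * Real.logb 2 (μ x / ν x) := by
    have h1 : ∑ x ∈ Bc, -(ν x * (Real.exp 1 * Real.log 2)⁻¹) ≤
        ∑ x ∈ Bc, μ x * Real.logb 2 (μ x / ν x) := Finset.sum_le_sum hBcterm
    have h2 : ∑ x ∈ Bc, -(ν x * (Real.exp 1 * Real.log 2)⁻¹) =
        -((∑ x ∈ Bc, ν x) * (Real.exp 1 * Real.log 2)⁻¹) := by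
      rw [Finset.sum_neg_distrib, ← Finset.sum_mul]
    have h3 : ∑ x ∈ Bc, ν x ≤ 1 := by
      rw [← hν1]
      exact Finset.sum_le_sum_of_subset_of_nonneg (Finset.filter_subset _ _)
        (fun x _ _ => hν0 x)
    have h4 : (∑ x ∈ Bc, ν x) * (Real.exp 1 * Real.log 2)⁻¹ ≤
        1 * (Real.exp 1 * Real.log 2)⁻¹ :=
      mul_le_mul_of_nonneg_right h3 (by positivity)
    rw [h2] at h1
    linarith
  have hsplit : ∑ x ∈ Bc, μ x * Real.logb 2 (μ x / ν x) +
      ∑ x ∈ B, μ x * Real.logb 2 (μ x / ν x) =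
      ∑ x, μ x * Real.logb 2 (μ x / ν x) :=
    Finset.sum_filter_add_sum_filter_not _ _ _
  have hEL : (1:ℝ) ≤ Real.exp 1 * Real.log 2 := by
    have h1 : (0.6931471803 : ℝ) < Real.log 2 := Real.log_two_gt_d9
    have h2 : (2.7182818283 : ℝ) < Real.exp 1 := Real.exp_one_gt_d9
    nlinarith
  have hinv : (Real.exp 1 * Real.log 2)⁻¹ ≤ 1 := by
    rw [inv_le_one_iff₀]; right; exact hEL
  have hμBnn : 0 ≤ ∑ x ∈ B, μ x := Finset.sum_nonneg fun x _ => hμ0 x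
  have hcomb : (50 * (I + 1)) * ∑ x ∈ B, μ x ≤ I + 1 := by
    rw [← hsplit] at hKL
    linarith
  nlinarith [hcomb, hI, hμBnn]

/-- Let `μ, ν_A, ν_B` be probability distributions on a finite set `U` with
`D(μ‖ν_A) ≤ I` and `D(μ‖ν_B) ≤ I` where `I ≥ 0`, and let `K = 2^{50(I+1)}`. Then the good set
`G = {x : μ(x) ≤ K·ν_A(x) ∧ μ(x) ≤ K·ν_B(x)}` satisfies `μ(G) ≥ 24/25`. -/
theorem good_set_large {U : Type*} [Fintype U] (μ νA νB : U → ℝ) (I : ℝ)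
    (hμ0 : ∀ x, 0 ≤ μ x) (hμ1 : ∑ x, μ x = 1)
    (hνA0 : ∀ x, 0 ≤ νA x) (hνA1 : ∑ x, νA x = 1)
    (hνB0 : ∀ x, 0 ≤ νB x) (hνB1 : ∑ x, νB x = 1)
    (habsA : ∀ x, 0 < μ x → 0 < νA x) (habsB : ∀ x, 0 < μ x → 0 < νB x)
    (hI : 0 ≤ I)
    (hKLA : ∑ x, μ x * Real.logb 2 (μ x / νA x) ≤ I)
    (hKLB : ∑ x, μ x * Real.logb 2 (μ x / νB x) ≤ I) :
    (24 / 25 : ℝ) ≤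
      ∑ x ∈ Finset.univ.filter
        (fun x => μ x ≤ (2 : ℝ) ^ (50 * (I + 1)) * νA x ∧
                  μ x ≤ (2 : ℝ) ^ (50 * (I + 1)) * νB x), μ x := by
  classical
  have hA := bad_small μ νA I hμ0 hνA0 hνA1 habsA hI hKLA
  have hB := bad_small μ νB I hμ0 hνB0 hνB1 habsB hI hKLB
  set BA := Finset.univ.filter (fun x => ¬ μ x ≤ (2:ℝ) ^ (50 * (I + 1)) * νA x) with hBA
  set BB := Finset.univ.filter (fun x => ¬ μ x ≤ (2:ℝ) ^ (50 * (I + 1)) * νB x) with hBB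
  have hsplit : ∑ x ∈ Finset.univ.filter
        (fun x => μ x ≤ (2 : ℝ) ^ (50 * (I + 1)) * νA x ∧
                  μ x ≤ (2 : ℝ) ^ (50 * (I + 1)) * νB x), μ x
      + ∑ x ∈ Finset.univ.filter
        (fun x => ¬ (μ x ≤ (2 : ℝ) ^ (50 * (I + 1)) * νA x ∧
                  μ x ≤ (2 : ℝ) ^ (50 * (I + 1)) * νB x)), μ x = 1 := by
    rw [← hμ1]
    exact Finset.sum_filter_add_sum_filter_not _ _ _
  have hsub : Finset.univ.filter
      (fun x => ¬ (μ x ≤ (2 : ℝ) ^ (50 * (I + 1)) * νA x ∧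
                  μ x ≤ (2 : ℝ) ^ (50 * (I + 1)) * νB x)) ⊆ BA ∪ BB := by
    intro x hx
    simp only [hBA, hBB, Finset.mem_filter, Finset.mem_union, Finset.mem_univ, true_and] at *
    tauto
  have h1 : ∑ x ∈ Finset.univ.filter
      (fun x => ¬ (μ x ≤ (2 : ℝ) ^ (50 * (I + 1)) * νA x ∧
                  μ x ≤ (2 : ℝ) ^ (50 * (I + 1)) * νB x)), μ x ≤ ∑ x ∈ BA ∪ BB, μ x :=
    Finset.sum_le_sum_of_subset_of_nonneg hsub (fun x _ _ => hμ0 x)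
  have h2 : ∑ x ∈ BA ∪ BB, μ x + ∑ x ∈ BA ∩ BB, μ x = ∑ x ∈ BA, μ x + ∑ x ∈ BB, μ x :=
    Finset.sum_union_inter
  have h3 : 0 ≤ ∑ x ∈ BA ∩ BB, μ x := Finset.sum_nonneg fun x _ => hμ0 x
  linarith
end

section
/- Let U be a finite set, let p_A, q_A, p_B, q_B : U → [0,1] with q_A(x) > 0 for all x, suppose μ(x) = p_A(x)·p_B(x), ν_A(x) = p_A(x)·q_A(x), and ν_B(x) = p_B(x)·q_B(x) are probability distributions on U, let I ≥ 0 with D(μ‖ν_A) ≤ I and D(μ‖ν_B) ≤ I, and set K = 2^{50(I+1)} and G = {x ∈ U : μ(x) ≤ K·ν_A(x) and μ(x) ≤ K·ν_B(x)}. Then Σ_{x∈G} ν_A(x)·min(p_B(x)/(K·q_A(x)), 1) = μ(G)/K ≥ (24/25)·2^{−50(I+1)}. -/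
/-!
On `G` the constraint `μ ≤ K ν_A` forces `p_B ≤ K q_A`, so the minimum is its first argument and
the acceptance weight is `μ / K` pointwise. For the bound, a Markov inequality for the
log-likelihood ratio gives `μ{μ > K ν} ≤ I / (50 I + 48) ≤ 1/50` (using `1 / ln 2 < 2`) for both
`ν = ν_A` and `ν = ν_B`, hence `μ(G) ≥ 24/25`.
-/

open Finset Real

lemma sub_le_mul_log_div {a b : ℝ} (ha : 0 ≤ a) (hb : 0 ≤ b) (hab : 0 < a → 0 < b) :
    a - b ≤ a * log (a / b) := by
  rcases ha.eq_or_lt with rfl | ha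
  · simpa using hb
  have h := one_sub_inv_le_log_of_pos (div_pos ha (hab ha))
  rw [inv_div] at h
  calc a - b = a * (1 - b / a) := by field_simp
    _ ≤ a * log (a / b) := by gcongr

lemma mul_le_mul_logb_div_of_rpow_mul_lt {a b t : ℝ} (hb : 0 < b) (h : 2 ^ t * b < a) :
    t * a ≤ a * logb 2 (a / b) := by
  have ha : 0 < a := lt_trans (by positivity) h
  have ht : t ≤ logb 2 (a / b) :=
    (le_logb_iff_rpow_le one_lt_two (div_pos ha hb)).2 ((le_div_iff₀ hb).2 h.le)
  nlinarith

lemma sum_filter_and_ge_sub {ι : Type*} [DecidableEq ι] (s : Finset ι) (p q : ι → Prop)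
    [DecidablePred p] [DecidablePred q] {f : ι → ℝ} (hf : ∀ x ∈ s, 0 ≤ f x) :
    ∑ x ∈ s, f x - ∑ x ∈ s with ¬p x, f x - ∑ x ∈ s with ¬q x, f x
      ≤ ∑ x ∈ s with p x ∧ q x, f x := by
  have hsplit := sum_filter_not_add_sum_filter s (fun x => p x ∧ q x) f
  have hunion := sum_union_inter (s₁ := s.filter (¬p ·)) (s₂ := s.filter (¬q ·)) (f := f)
  have hinter : 0 ≤ ∑ x ∈ s.filter (¬p ·) ∩ s.filter (¬q ·), f x :=
    sum_nonneg fun x hx => hf x (mem_filter.1 (mem_inter.1 hx).1).1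
  simp only [not_and_or, filter_or] at hsplit
  linarith

section KullbackLeiblerTail

variable {U : Type*} [Fintype U] {μ ν : U → ℝ}

/-- On `S = {μ > 2^t ν}` each unit of mass contributes at least `t` bits; off `S`,
`μ log₂(μ/ν) ≥ (μ - ν)/ln 2` together with `ν(U) ≤ μ(U)` loses at most `μ(S)/ln 2`. -/
lemma mul_sum_filter_not_le_le_sum_mul_logb (hμ : ∀ x, 0 ≤ μ x) (hν : ∀ x, 0 ≤ ν x)
    (hμν : ∀ x, 0 < μ x → 0 < ν x) (hmass : ∑ x, ν x ≤ ∑ x, μ x) (t : ℝ) :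
    (t - 1 / log 2) * ∑ x with ¬μ x ≤ 2 ^ t * ν x, μ x
      ≤ ∑ x, μ x * logb 2 (μ x / ν x) := by
  set S := univ.filter fun x => ¬μ x ≤ 2 ^ t * ν x
  set T := univ.filter fun x => μ x ≤ 2 ^ t * ν x
  have hbad : t * ∑ x ∈ S, μ x ≤ ∑ x ∈ S, μ x * logb 2 (μ x / ν x) := by
    rw [mul_sum]
    refine sum_le_sum fun x hx => ?_
    have hlt := not_le.1 (mem_filter.1 hx).2
    exact mul_le_mul_logb_div_of_rpow_mul_lt
      (hμν x (lt_of_le_of_lt (by have := hν x; positivity) hlt)) hlt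
  have hgood : (∑ x ∈ T, μ x - ∑ x ∈ T, ν x) / log 2
      ≤ ∑ x ∈ T, μ x * logb 2 (μ x / ν x) := by
    rw [← sum_sub_distrib, sum_div]
    refine sum_le_sum fun x _ => ?_
    rw [← log_div_log, mul_div_assoc']
    gcongr
    exact sub_le_mul_log_div (hμ x) (hν x) (hμν x)
  have hcomp : -∑ x ∈ S, μ x ≤ ∑ x ∈ T, μ x - ∑ x ∈ T, ν x := by
    have := sum_filter_not_add_sum_filter univ (fun x => μ x ≤ 2 ^ t * ν x) μ
    have := sum_filter_not_add_sum_filter univ (fun x => μ x ≤ 2 ^ t * ν x) ν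
    have : 0 ≤ ∑ x ∈ S, ν x := sum_nonneg fun x _ => hν x
    linarith
  calc (t - 1 / log 2) * ∑ x ∈ S, μ x = t * ∑ x ∈ S, μ x + (-∑ x ∈ S, μ x) / log 2 := by ring
    _ ≤ ∑ x ∈ S, μ x * logb 2 (μ x / ν x) + ∑ x ∈ T, μ x * logb 2 (μ x / ν x) := by
      gcongr
      exact le_trans (by gcongr) hgood
    _ = ∑ x, μ x * logb 2 (μ x / ν x) := sum_filter_not_add_sum_filter _ _ _

lemma sum_filter_not_le_le_one_div_fifty (hμ : ∀ x, 0 ≤ μ x) (hν : ∀ x, 0 ≤ ν x)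
    (hμν : ∀ x, 0 < μ x → 0 < ν x) (hmass : ∑ x, ν x ≤ ∑ x, μ x) {I : ℝ} (hI : 0 ≤ I)
    (hKL : ∑ x, μ x * logb 2 (μ x / ν x) ≤ I) :
    ∑ x with ¬μ x ≤ 2 ^ (50 * (I + 1)) * ν x, μ x ≤ 1 / 50 := by
  have hmarkov := mul_sum_filter_not_le_le_sum_mul_logb hμ hν hμν hmass (50 * (I + 1))
  have hS : 0 ≤ ∑ x with ¬μ x ≤ 2 ^ (50 * (I + 1)) * ν x, μ x := sum_nonneg fun x _ => hμ x
  have hlog2 : 1 / log 2 ≤ 2 := by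
    rw [div_le_iff₀ (log_pos one_lt_two)]
    linarith [log_two_gt_d9]
  nlinarith

end KullbackLeiblerTail

lemma mul_mul_min_div_mul_one_eq_div {a b q K : ℝ} (ha : 0 ≤ a) (hq : 0 < q) (hK : 0 < K)
    (h : a * b ≤ K * (a * q)) :
    a * q * min (b / (K * q)) 1 = a * b / K := by
  rcases ha.eq_or_lt with rfl | ha
  · simp
  have hb : b ≤ K * q := le_of_mul_le_mul_left (by linarith) ha
  rw [min_eq_left ((div_le_one (by positivity)).2 hb)]
  field_simp

theorem acceptance_on_good_set_general {U : Type*} [Fintype U] (pA qA pB qB : U → ℝ) (I : ℝ)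
    (hpA : ∀ x, pA x ∈ Set.Icc (0 : ℝ) 1)
    (hpB : ∀ x, pB x ∈ Set.Icc (0 : ℝ) 1) (hqB : ∀ x, qB x ∈ Set.Icc (0 : ℝ) 1)
    (hqA0 : ∀ x, 0 < qA x)
    (hμ1 : ∑ x, pA x * pB x = 1)
    (hνA1 : ∑ x, pA x * qA x = 1)
    (hνB1 : ∑ x, pB x * qB x = 1)
    (habsB : ∀ x, 0 < pA x * pB x → 0 < pB x * qB x)
    (hI : 0 ≤ I)
    (hKLA : ∑ x, pA x * pB x * Real.logb 2 ((pA x * pB x) / (pA x * qA x)) ≤ I)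
    (hKLB : ∑ x, pA x * pB x * Real.logb 2 ((pA x * pB x) / (pB x * qB x)) ≤ I) :
    (∑ x ∈ Finset.univ.filter
        (fun x => pA x * pB x ≤ (2 : ℝ) ^ (50 * (I + 1)) * (pA x * qA x) ∧
                  pA x * pB x ≤ (2 : ℝ) ^ (50 * (I + 1)) * (pB x * qB x)),
        pA x * qA x * min (pB x / ((2 : ℝ) ^ (50 * (I + 1)) * qA x)) 1)
      = (∑ x ∈ Finset.univ.filter
          (fun x => pA x * pB x ≤ (2 : ℝ) ^ (50 * (I + 1)) * (pA x * qA x) ∧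
                    pA x * pB x ≤ (2 : ℝ) ^ (50 * (I + 1)) * (pB x * qB x)),
          pA x * pB x) / (2 : ℝ) ^ (50 * (I + 1)) ∧
    (24 / 25 : ℝ) * (2 : ℝ) ^ (-(50 * (I + 1)))
      ≤ (∑ x ∈ Finset.univ.filter
          (fun x => pA x * pB x ≤ (2 : ℝ) ^ (50 * (I + 1)) * (pA x * qA x) ∧
                    pA x * pB x ≤ (2 : ℝ) ^ (50 * (I + 1)) * (pB x * qB x)),
          pA x * pB x) / (2 : ℝ) ^ (50 * (I + 1)) := by
  classical
  have hK : (0 : ℝ) < 2 ^ (50 * (I + 1)) := by positivity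
  have hμ x : 0 ≤ pA x * pB x := mul_nonneg (hpA x).1 (hpB x).1
  refine ⟨?_, ?_⟩
  · rw [sum_div]
    exact sum_congr rfl fun x hx =>
      mul_mul_min_div_mul_one_eq_div (hpA x).1 (hqA0 x) hK (mem_filter.1 hx).2.1
  · have hbadA := sum_filter_not_le_le_one_div_fifty hμ
      (fun x => mul_nonneg (hpA x).1 (hqA0 x).le)
      (fun x hx => mul_pos (pos_of_mul_pos_left hx (hpB x).1) (hqA0 x))
      (by rw [hμ1, hνA1]) hI hKLA
    have hbadB := sum_filter_not_le_le_one_div_fifty hμ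
      (fun x => mul_nonneg (hpB x).1 (hqB x).1) habsB (by rw [hμ1, hνB1]) hI hKLB
    have hgood := sum_filter_and_ge_sub univ
      (fun x => pA x * pB x ≤ 2 ^ (50 * (I + 1)) * (pA x * qA x))
      (fun x => pA x * pB x ≤ 2 ^ (50 * (I + 1)) * (pB x * qB x)) fun x _ => hμ x
    rw [rpow_neg zero_le_two, ← div_eq_mul_inv]
    gcongr
    linarith

/-- With `μ = p_A·p_B`, `ν_A = p_A·q_A`, `ν_B = p_B·q_B` probability distributions on `U`,
`D(μ‖ν_A) ≤ I`, `D(μ‖ν_B) ≤ I`, `I ≥ 0`, `K = 2^{50(I+1)}` and the good set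
`G = {x : μ(x) ≤ K·ν_A(x) ∧ μ(x) ≤ K·ν_B(x)}`, the total acceptance weight on `G` equals
`μ(G)/K` and is at least `(24/25)·2^{−50(I+1)}`. -/
theorem acceptance_on_good_set {U : Type*} [Fintype U] (pA qA pB qB : U → ℝ) (I : ℝ)
    (hpA : ∀ x, pA x ∈ Set.Icc (0 : ℝ) 1) (hqA : ∀ x, qA x ∈ Set.Icc (0 : ℝ) 1)
    (hpB : ∀ x, pB x ∈ Set.Icc (0 : ℝ) 1) (hqB : ∀ x, qB x ∈ Set.Icc (0 : ℝ) 1)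
    (hqA0 : ∀ x, 0 < qA x)
    (hμ1 : ∑ x, pA x * pB x = 1)
    (hνA1 : ∑ x, pA x * qA x = 1)
    (hνB1 : ∑ x, pB x * qB x = 1)
    (habsB : ∀ x, 0 < pA x * pB x → 0 < pB x * qB x)
    (hI : 0 ≤ I)
    (hKLA : ∑ x, pA x * pB x * Real.logb 2 ((pA x * pB x) / (pA x * qA x)) ≤ I)
    (hKLB : ∑ x, pA x * pB x * Real.logb 2 ((pA x * pB x) / (pB x * qB x)) ≤ I) :
    (∑ x ∈ Finset.univ.filter
        (fun x => pA x * pB x ≤ (2 : ℝ) ^ (50 * (I + 1)) * (pA x * qA x) ∧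
                  pA x * pB x ≤ (2 : ℝ) ^ (50 * (I + 1)) * (pB x * qB x)),
        pA x * qA x * min (pB x / ((2 : ℝ) ^ (50 * (I + 1)) * qA x)) 1)
      = (∑ x ∈ Finset.univ.filter
          (fun x => pA x * pB x ≤ (2 : ℝ) ^ (50 * (I + 1)) * (pA x * qA x) ∧
                    pA x * pB x ≤ (2 : ℝ) ^ (50 * (I + 1)) * (pB x * qB x)),
          pA x * pB x) / (2 : ℝ) ^ (50 * (I + 1)) ∧
    (24 / 25 : ℝ) * (2 : ℝ) ^ (-(50 * (I + 1)))
      ≤ (∑ x ∈ Finset.univ.filter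
          (fun x => pA x * pB x ≤ (2 : ℝ) ^ (50 * (I + 1)) * (pA x * qA x) ∧
                    pA x * pB x ≤ (2 : ℝ) ^ (50 * (I + 1)) * (pB x * qB x)),
          pA x * pB x) / (2 : ℝ) ^ (50 * (I + 1)) :=
  acceptance_on_good_set_general pA qA pB qB I hpA hpB hqB hqA0 hμ1 hνA1 hνB1 habsB hI hKLA hKLB
end

section
/- Let U be a finite set, let p_A, q_A, p_B, q_B : U → [0,1] with q_A(x) > 0 for all x, suppose μ(x) = p_A(x)·p_B(x), ν_A(x) = p_A(x)·q_A(x), and ν_B(x) = p_B(x)·q_B(x) are probability distributions on U, let I ≥ 0 with D(μ‖ν_A) ≤ I and D(μ‖ν_B) ≤ I, and set K = 2^{50(I+1)}. Let acc(x) = ν_A(x)·min(p_B(x)/(K·q_A(x)), 1) and Z = Σ_{x∈U} acc(x). Then Z > 0, and the normalized distribution μ₁(x) = acc(x)/Z satisfies Σ_{x∈U} |μ₁(x) − μ(x)| ≤ 2/9. -/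
open Finset

/-- Core lemma: if `μ, ν` are distributions with `D(μ‖ν) ≤ I`, `K = 2^{50(I+1)}`,
then `m x = min (μ x / K) (ν x)` has positive total mass `M` and `m/M` is `2/9`-close
to `μ` in total variation. -/
lemma aux_cond_output {U : Type*} [Fintype U] (μ ν : U → ℝ) (I K : ℝ)
    (hμ0 : ∀ x, 0 ≤ μ x) (hν0 : ∀ x, 0 ≤ ν x)
    (hνpos : ∀ x, 0 < μ x → 0 < ν x)
    (hμ1 : ∑ x, μ x = 1) (hν1 : ∑ x, ν x = 1)
    (hI : 0 ≤ I) (hK : K = (2 : ℝ) ^ (50 * (I + 1)))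
    (hKL : ∑ x, μ x * Real.logb 2 (μ x / ν x) ≤ I) :
    0 < (∑ x, min (μ x / K) (ν x)) ∧
    ∑ x, |min (μ x / K) (ν x) / (∑ y, min (μ y / K) (ν y)) - μ x| ≤ 2 / 9 := by
  have hKpos : 0 < K := by rw [hK]; positivity
  have hlogbK : Real.logb 2 K = 50 * (I + 1) := by
    rw [hK]; exact Real.logb_rpow (by norm_num) (by norm_num)
  have hlog2 : (0.6931471803 : ℝ) < Real.log 2 := Real.log_two_gt_d9
  -- pointwise lower bound on KL summands
  have stepA : ∀ x, -(ν x / Real.log 2) ≤ μ x * Real.logb 2 (μ x / ν x) := by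
    intro x
    rcases eq_or_lt_of_le (hμ0 x) with h | h
    · rw [← h]; simp only [zero_mul]
      have : 0 ≤ ν x / Real.log 2 := div_nonneg (hν0 x) (by linarith)
      linarith
    · have hν := hνpos x h
      have h1 : Real.log (ν x / μ x) ≤ ν x / μ x - 1 :=
        Real.log_le_sub_one_of_pos (by positivity)
      have h2 : Real.log (μ x / ν x) = -Real.log (ν x / μ x) := by
        rw [← Real.log_inv, inv_div]
      have h3 : 1 - ν x / μ x ≤ Real.log (μ x / ν x) := by rw [h2]; linarith
      have h4 : -(ν x) ≤ μ x * Real.log (μ x / ν x) := by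
        have h5 : μ x * (1 - ν x / μ x) = μ x - ν x := by field_simp
        nlinarith [mul_le_mul_of_nonneg_left h3 (le_of_lt h)]
      rw [Real.logb, ← mul_div_assoc, ← neg_div]
      gcongr <;> linarith
  -- pointwise lower bound on the "bad" set
  have stepB : ∀ x, K * ν x < μ x →
      μ x * (50 * (I + 1)) ≤ μ x * Real.logb 2 (μ x / ν x) := by
    intro x hx
    have hμpos : 0 < μ x := lt_of_le_of_lt (mul_nonneg hKpos.le (hν0 x)) hx
    have hνx : 0 < ν x := hνpos x hμpos
    have hr : K ≤ μ x / ν x := by rw [le_div_iff₀ hνx]; nlinarith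
    have : (50 : ℝ) * (I + 1) ≤ Real.logb 2 (μ x / ν x) := by
      rw [← hlogbK]
      exact Real.logb_le_logb_of_le (by norm_num) hKpos hr
    exact mul_le_mul_of_nonneg_left this hμpos.le
  -- the bad set has small mass
  set T : Finset U := Finset.univ.filter (fun x => K * ν x < μ x) with hT
  have hsmall : ∑ x ∈ T, μ x ≤ 3 / 100 := by
    have hsplit := Finset.sum_filter_add_sum_filter_not Finset.univ
      (fun x => K * ν x < μ x) (fun x => μ x * Real.logb 2 (μ x / ν x))
    have hsplitν := Finset.sum_filter_add_sum_filter_not Finset.univ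
      (fun x => K * ν x < μ x) ν
    have hcompl : -(1 / Real.log 2) ≤
        ∑ x ∈ Finset.univ.filter (fun x => ¬ K * ν x < μ x),
          μ x * Real.logb 2 (μ x / ν x) := by
      have h1 : ∑ x ∈ Finset.univ.filter (fun x => ¬ K * ν x < μ x),
          (-(ν x / Real.log 2)) ≤ ∑ x ∈ Finset.univ.filter (fun x => ¬ K * ν x < μ x),
          μ x * Real.logb 2 (μ x / ν x) :=
        Finset.sum_le_sum fun x _ => stepA x
      have h2 : ∑ x ∈ Finset.univ.filter (fun x => ¬ K * ν x < μ x), ν x ≤ 1 := by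
        rw [← hν1]
        exact Finset.sum_le_sum_of_subset_of_nonneg (Finset.filter_subset _ _)
          (fun x _ _ => hν0 x)
      have h3 : ∑ x ∈ Finset.univ.filter (fun x => ¬ K * ν x < μ x),
          (-(ν x / Real.log 2)) =
          -((∑ x ∈ Finset.univ.filter (fun x => ¬ K * ν x < μ x), ν x) / Real.log 2) := by
        rw [Finset.sum_neg_distrib, Finset.sum_div]
      rw [h3] at h1
      refine le_trans ?_ h1
      rw [neg_le_neg_iff]
      gcongr <;> linarith
    have hTf : ∑ x ∈ T, μ x * Real.logb 2 (μ x / ν x) ≤ I + 1 / Real.log 2 := by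
      rw [hT]; linarith [hKL, hcompl, hsplit]
    have hTlb : (∑ x ∈ T, μ x) * (50 * (I + 1)) ≤
        ∑ x ∈ T, μ x * Real.logb 2 (μ x / ν x) := by
      rw [Finset.sum_mul]
      refine Finset.sum_le_sum fun x hx => ?_
      exact stepB x (by simpa [hT] using hx)
    have hinv : 1 / Real.log 2 ≤ 1.45 := by
      rw [div_le_iff₀ (by linarith)]; linarith
    have hs0 : 0 ≤ ∑ x ∈ T, μ x := Finset.sum_nonneg fun x _ => hμ0 x
    nlinarith [hTf, hTlb, hinv, hs0]
  -- basic facts about m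
  have hm0 : ∀ x, 0 ≤ min (μ x / K) (ν x) := fun x =>
    le_min (div_nonneg (hμ0 x) hKpos.le) (hν0 x)
  have hKm_le : ∀ x, K * min (μ x / K) (ν x) ≤ μ x := by
    intro x
    calc K * min (μ x / K) (ν x) ≤ K * (μ x / K) :=
          mul_le_mul_of_nonneg_left (min_le_left _ _) hKpos.le
      _ = μ x := by field_simp
  have hdiff : ∀ x, μ x - K * min (μ x / K) (ν x) ≤ if K * ν x < μ x then μ x else 0 := by
    intro x
    split_ifs with h
    · nlinarith [mul_nonneg hKpos.le (hm0 x)]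
    · push_neg at h
      have hmin : min (μ x / K) (ν x) = μ x / K :=
        min_eq_left (by rw [div_le_iff₀ hKpos]; nlinarith)
      rw [hmin]
      have : K * (μ x / K) = μ x := by field_simp
      rw [this]; simp
  set Z : ℝ := ∑ x, min (μ x / K) (ν x) with hZdef
  have hKZ_lb : 97 / 100 ≤ K * Z := by
    have h1 : ∑ x, (μ x - K * min (μ x / K) (ν x)) ≤
        ∑ x, (if K * ν x < μ x then μ x else 0) := Finset.sum_le_sum fun x _ => hdiff x
    have h2 : ∑ x, (if K * ν x < μ x then μ x else 0) = ∑ x ∈ T, μ x := by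
      rw [hT, Finset.sum_filter]
    have h3 : ∑ x, (μ x - K * min (μ x / K) (ν x)) = 1 - K * Z := by
      rw [Finset.sum_sub_distrib, hμ1, hZdef, Finset.mul_sum]
    rw [h3, h2] at h1
    linarith
  have hKZ_ub : K * Z ≤ 1 := by
    have : ∑ x, K * min (μ x / K) (ν x) ≤ ∑ x, μ x :=
      Finset.sum_le_sum fun x _ => hKm_le x
    rw [hμ1] at this
    rw [hZdef, Finset.mul_sum]
    exact this
  have hZpos : 0 < Z := by
    by_contra h
    push_neg at h
    nlinarith
  refine ⟨hZpos, ?_⟩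
  have hpt : ∀ x, |min (μ x / K) (ν x) / Z - μ x| ≤
      (min (μ x / K) (ν x) / Z - K * min (μ x / K) (ν x)) +
      (μ x - K * min (μ x / K) (ν x)) := by
    intro x
    set m := min (μ x / K) (ν x) with hm
    have h1 : K * m ≤ m / Z := by
      rw [le_div_iff₀ hZpos]
      nlinarith [hm0 x]
    have h2 : K * m ≤ μ x := hKm_le x
    rw [abs_le]
    constructor <;> nlinarith
  calc ∑ x, |min (μ x / K) (ν x) / Z - μ x|
      ≤ ∑ x, ((min (μ x / K) (ν x) / Z - K * min (μ x / K) (ν x)) +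
        (μ x - K * min (μ x / K) (ν x))) := Finset.sum_le_sum fun x _ => hpt x
    _ = Z / Z - K * Z + (1 - K * Z) := by
        rw [Finset.sum_add_distrib, Finset.sum_sub_distrib, Finset.sum_sub_distrib,
          ← Finset.sum_div, ← Finset.mul_sum, hμ1, ← hZdef]
    _ ≤ 2 / 9 := by
        rw [div_self hZpos.ne']
        linarith

/-- With `μ = p_A·p_B`, `ν_A = p_A·q_A`, `ν_B = p_B·q_B` probability distributions on `U`,
`D(μ‖ν_A) ≤ I`, `D(μ‖ν_B) ≤ I`, `I ≥ 0`, `K = 2^{50(I+1)}`, acceptance weights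
`acc(x) = ν_A(x)·min(p_B(x)/(K·q_A(x)), 1)` and `Z = Σ_x acc(x)`: then `Z > 0` and the
output distribution `μ₁ = acc/Z` of the sampling protocol conditioned on success satisfies
`Σ_x |μ₁(x) − μ(x)| ≤ 2/9`. -/
theorem conditional_output_close {U : Type*} [Fintype U] (pA qA pB qB : U → ℝ) (I : ℝ)
    (hpA : ∀ x, pA x ∈ Set.Icc (0 : ℝ) 1) (hqA : ∀ x, qA x ∈ Set.Icc (0 : ℝ) 1)
    (hpB : ∀ x, pB x ∈ Set.Icc (0 : ℝ) 1) (hqB : ∀ x, qB x ∈ Set.Icc (0 : ℝ) 1)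
    (hqA0 : ∀ x, 0 < qA x)
    (hμ1 : ∑ x, pA x * pB x = 1)
    (hνA1 : ∑ x, pA x * qA x = 1)
    (hνB1 : ∑ x, pB x * qB x = 1)
    (habsB : ∀ x, 0 < pA x * pB x → 0 < pB x * qB x)
    (hI : 0 ≤ I)
    (hKLA : ∑ x, pA x * pB x * Real.logb 2 ((pA x * pB x) / (pA x * qA x)) ≤ I)
    (hKLB : ∑ x, pA x * pB x * Real.logb 2 ((pA x * pB x) / (pB x * qB x)) ≤ I) :
    0 < (∑ x, pA x * qA x * min (pB x / ((2 : ℝ) ^ (50 * (I + 1)) * qA x)) 1) ∧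
    ∑ x, |(pA x * qA x * min (pB x / ((2 : ℝ) ^ (50 * (I + 1)) * qA x)) 1) /
            (∑ y, pA y * qA y * min (pB y / ((2 : ℝ) ^ (50 * (I + 1)) * qA y)) 1)
          - pA x * pB x| ≤ 2 / 9 := by
  set K : ℝ := (2 : ℝ) ^ (50 * (I + 1)) with hK
  have hKpos : 0 < K := by rw [hK]; positivity
  have hacc : ∀ x, pA x * qA x * min (pB x / (K * qA x)) 1 =
      min (pA x * pB x / K) (pA x * qA x) := by
    intro x
    have hpA0 := (hpA x).1
    have hqAx := hqA0 x
    rw [mul_min_of_nonneg _ _ (by positivity : (0:ℝ) ≤ pA x * qA x), mul_one]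
    congr 1
    field_simp
  simp_rw [hacc]
  exact aux_cond_output (fun x => pA x * pB x) (fun x => pA x * qA x) I K
    (fun x => mul_nonneg (hpA x).1 (hpB x).1)
    (fun x => mul_nonneg (hpA x).1 (hqA x).1)
    (fun x hx => by
      have hx' : 0 < pA x * pB x := hx
      have hpApos : 0 < pA x := by
        by_contra h
        push_neg at h
        nlinarith [mul_nonneg (neg_nonneg.mpr h) (hpB x).1]
      exact mul_pos hpApos (hqA0 x))
    hμ1 hνA1 hI hK hKLA
end

section
/- For all real numbers p, q with 0 ≤ p ≤ 1 and 0 ≤ q ≤ 1, √(p·q) + √((1−p)·(1−q)) ≤ 1 − (q − p)²/4. -/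
lemma aux_sqrt (a b : ℝ) (ha : 0 ≤ a) (ha1 : a ≤ 1) (hb : 0 ≤ b) (hb1 : b ≤ 1) :
    Real.sqrt (a * b) ≤ (a + b) / 2 - (a - b) ^ 2 / 8 := by
  rw [Real.sqrt_mul ha]
  set x := Real.sqrt a with hxdef
  set y := Real.sqrt b with hydef
  have hx0 : 0 ≤ x := Real.sqrt_nonneg a
  have hy0 : 0 ≤ y := Real.sqrt_nonneg b
  have hx2 : x ^ 2 = a := Real.sq_sqrt ha
  have hy2 : y ^ 2 = b := Real.sq_sqrt hb
  have hx1 : x ≤ 1 := by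
    rw [hxdef]; exact Real.sqrt_le_one.mpr ha1
  have hy1 : y ≤ 1 := by
    rw [hydef]; exact Real.sqrt_le_one.mpr hb1
  have h4 : (x + y) ^ 2 ≤ 4 := by nlinarith
  nlinarith [mul_nonneg (sq_nonneg (x - y)) (sub_nonneg.mpr h4), sq_nonneg (x - y)]

/-- For all `p, q ∈ [0,1]`, `√(p·q) + √((1−p)·(1−q)) ≤ 1 − (q − p)²/4`. -/
theorem sqrt_mul_add_sqrt_mul_le (p q : ℝ) (hp : p ∈ Set.Icc (0 : ℝ) 1)
    (hq : q ∈ Set.Icc (0 : ℝ) 1) :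
    Real.sqrt (p * q) + Real.sqrt ((1 - p) * (1 - q)) ≤ 1 - (q - p) ^ 2 / 4 := by
  obtain ⟨hp0, hp1⟩ := hp
  obtain ⟨hq0, hq1⟩ := hq
  have h1 := aux_sqrt p q hp0 hp1 hq0 hq1
  have h2 := aux_sqrt (1 - p) (1 - q) (by linarith) (by linarith) (by linarith) (by linarith)
  nlinarith [h1, h2]
end

section
/- Let n ≥ 2, let S', T' ⊆ {0,1}^{n−1}, and let S = {0x : x ∈ S'} and T = {0y : y ∈ T'} be the sets obtained by prepending the bit 0. Then the signed discrepancy of GT_n on S × T with respect to μ_n equals ((n−1)/(2n)) times the signed discrepancy of GT_{n−1} on S' × T' with respect to μ_{n−1}: D_n(S × T) = ((n−1)/(2n))·D_{n−1}(S' × T'). -/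
lemma val_cons_false {m : ℕ} (x : Fin m → Bool) : val (Fin.cons false x) = val x := by
  unfold val
  rw [Fin.sum_univ_succ]
  simp only [Fin.cons_zero, Fin.cons_succ, Fin.val_succ, cond_false, if_false]
  have h : ∀ i : Fin m, m - ((i : ℕ) + 1) = m - 1 - (i : ℕ) := fun i => by omega
  simp [h]

lemma min_cons {m : ℕ} {x y : Fin m → Bool}
    (hA : (Finset.univ.filter fun i : Fin (m+1) => (Fin.cons false x : Fin (m+1) → Bool) i ≠ (Fin.cons false y : Fin (m+1) → Bool) i).Nonempty)
    (hB : (Finset.univ.filter fun i => x i ≠ y i).Nonempty) :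
    (((Finset.univ.filter fun i : Fin (m+1) => (Fin.cons false x : Fin (m+1) → Bool) i ≠ (Fin.cons false y : Fin (m+1) → Bool) i).min' hA : Fin (m+1)) : ℕ)
      = (((Finset.univ.filter fun i => x i ≠ y i).min' hB : Fin m) : ℕ) + 1 := by
  set A := Finset.univ.filter fun i : Fin (m+1) => (Fin.cons false x : Fin (m+1) → Bool) i ≠ (Fin.cons false y : Fin (m+1) → Bool) i with hAdef
  set B := Finset.univ.filter fun i : Fin m => x i ≠ y i with hBdef
  have hb : B.min' hB ∈ B := Finset.min'_mem _ _
  have hbx : x (B.min' hB) ≠ y (B.min' hB) := (Finset.mem_filter.mp hb).2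
  have hsucc : (B.min' hB).succ ∈ A := by
    simp [hAdef, Fin.cons_succ, hbx]
  have h1 : A.min' hA ≤ (B.min' hB).succ := Finset.min'_le _ _ hsucc
  have ha : A.min' hA ∈ A := Finset.min'_mem _ _
  have h2 : (B.min' hB).succ ≤ A.min' hA := by
    rcases Fin.eq_zero_or_eq_succ (A.min' hA) with h0 | ⟨j, hj⟩
    · exfalso
      rw [h0] at ha
      simp [hAdef] at ha
    · rw [hj] at ha ⊢
      have hjB : j ∈ B := by
        simp only [hAdef, Finset.mem_filter, Fin.cons_succ] at ha
        simp [hBdef, ha.2]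
      exact Fin.succ_le_succ_iff.mpr (Finset.min'_le _ _ hjB)
  have heq : A.min' hA = (B.min' hB).succ := le_antisymm h1 h2
  rw [heq, Fin.val_succ]

lemma muGT_ne {n : ℕ} {x y : Fin n → Bool} (h : x ≠ y)
    (hne : (Finset.univ.filter fun i => x i ≠ y i).Nonempty) :
    muGT n x y = (1 / n) *
      (2 : ℝ) ^ (-(2 * (n : ℤ) -
        ((((Finset.univ.filter fun i => x i ≠ y i).min' hne : Fin n) : ℕ) + 1))) := by
  rw [muGT, dif_neg h]

lemma muGT_cons {m : ℕ} (hm : 1 ≤ m) (x y : Fin m → Bool) :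
    muGT (m + 1) (Fin.cons false x : Fin (m+1) → Bool) (Fin.cons false y : Fin (m+1) → Bool)
      = ((m : ℝ) / (2 * (m + 1))) * muGT m x y := by
  by_cases h : x = y
  · subst h; simp [muGT]
  · have hc : (Fin.cons false x : Fin (m+1) → Bool) ≠ (Fin.cons false y : Fin (m+1) → Bool) := by
      intro he
      exact h (funext fun i => by simpa using congrFun he i.succ)
    have hA : (Finset.univ.filter fun i : Fin (m+1) => (Fin.cons false x : Fin (m+1) → Bool) i ≠ (Fin.cons false y : Fin (m+1) → Bool) i).Nonempty := by
      obtain ⟨i, hi⟩ := Function.ne_iff.mp hc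
      exact ⟨i, Finset.mem_filter.mpr ⟨Finset.mem_univ i, hi⟩⟩
    have hB : (Finset.univ.filter fun i => x i ≠ y i).Nonempty := by
      obtain ⟨i, hi⟩ := Function.ne_iff.mp h
      exact ⟨i, Finset.mem_filter.mpr ⟨Finset.mem_univ i, hi⟩⟩
    rw [muGT_ne hc hA, muGT_ne h hB, min_cons hA hB]
    set k : ℕ := (((Finset.univ.filter fun i => x i ≠ y i).min' hB : Fin m) : ℕ)
    have hm0 : (m : ℝ) ≠ 0 := Nat.cast_ne_zero.mpr (by omega)
    have hm1 : (m : ℝ) + 1 ≠ 0 := by positivity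
    have he : (-(2 * (((m : ℤ)) + 1) - ((k : ℤ) + 1 + 1)) : ℤ)
        = (-(2 * (m : ℤ) - ((k : ℤ) + 1))) + (-1) := by ring
    push_cast
    rw [he, zpow_add₀ (by norm_num : (2:ℝ) ≠ 0)]
    field_simp

/-- Self-reducibility of the Greater-Than discrepancy: for `n = m + 1 ≥ 2`, if `S` and `T`
are obtained from `S', T' ⊆ {0,1}^{n−1}` by prepending the bit `0` to every string, then
`D_n(S × T) = ((n−1)/(2n))·D_{n−1}(S' × T')`. -/
theorem discGT_prepend_zero (m : ℕ) (hm : 1 ≤ m) (S' T' : Finset (Fin m → Bool)) :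
    discGT (m + 1) (S'.image (Fin.cons false)) (T'.image (Fin.cons false)) =
      ((m : ℝ) / (2 * (m + 1))) * discGT m S' T' := by
  unfold discGT
  rw [Finset.sum_image (fun a _ b _ h => Fin.cons_right_injective _ h), Finset.mul_sum]
  refine Finset.sum_congr rfl fun x hx => ?_
  rw [Finset.sum_image (fun a _ b _ h => Fin.cons_right_injective _ h), Finset.mul_sum]
  refine Finset.sum_congr rfl fun y hy => ?_
  rw [val_cons_false, val_cons_false, muGT_cons hm]
  split
  · rfl
  · ring
end
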